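/- arXiv:1902.09194 — 4 statements merged into one kernel-verified Lean document; each statement's English description precedes it below -/
import Mathlib

section
/- Let a, c be real quaternions with a ≠ 0 and a + star a ≠ 0 (equivalently, the real part of a is nonzero), where star denotes quaternion conjugation. Then x := (2·(a + star a))⁻¹·(c + a⁻¹·c·(star a)) satisfies the equation a·x + x·a = c. -/
/-!
With `y = c + a⁻¹ * c * star a`, the term `a⁻¹ * c * star a * a` collapses to `star a * c`
because `star a * a = a * star a` is real, hence central. So `a * y + y * a` equals
`(a + star a) * c + c * (a + star a) = 2 * (a + star a) * c`, again because `a + star a = 2 a.re`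
is real; dividing by the central element `2 * (a + star a)` gives `c`.
-/

theorem Commute.mul_inv_mul_add_inv_mul_mul_eq {D : Type*} [DivisionRing D] {s a y c : D}
    (hsa : Commute s a) (hs : s ≠ 0) (h : a * y + y * a = s * c) :
    a * (s⁻¹ * y) + s⁻¹ * y * a = c := by
  rw [← mul_assoc, ← hsa.inv_left₀.eq, mul_assoc, mul_assoc, ← mul_add, h,
    inv_mul_cancel_left₀ hs]

namespace Quaternion

variable {R : Type*} [Field R] [LinearOrder R] [IsStrictOrderedRing R]

theorem inv_mul_mul_star_mul (a c : ℍ[R]) : a⁻¹ * c * star a * a = star a * c := by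
  rcases eq_or_ne a 0 with rfl | ha
  · simp
  calc a⁻¹ * c * star a * a = a⁻¹ * (c * (star a * a)) := by simp only [mul_assoc]
    _ = a⁻¹ * (a * star a * c) := by rw [star_mul_self, ← coe_commutes, self_mul_star]
    _ = star a * c := by rw [← mul_assoc, ← mul_assoc, inv_mul_cancel₀ ha, one_mul]

theorem commute_self_add_star (a b : ℍ[R]) : Commute (a + star a) b := by
  rw [self_add_star']
  exact coe_commutes _ _

theorem mul_add_inv_mul_star_add_mul (a c : ℍ[R]) :
    a * (c + a⁻¹ * c * star a) + (c + a⁻¹ * c * star a) * a = 2 * (a + star a) * c := by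
  rcases eq_or_ne a 0 with rfl | ha
  · simp
  rw [mul_add, add_mul, inv_mul_mul_star_mul, ← mul_assoc, ← mul_assoc, mul_inv_cancel₀ ha,
    one_mul]
  calc a * c + c * star a + (c * a + star a * c)
      = (a + star a) * c + c * (a + star a) := by noncomm_ring
    _ = 2 * (a + star a) * c := by rw [← (commute_self_add_star a c).eq]; noncomm_ring

end Quaternion

theorem quaternion_sylvester_equal_coeffs_general (a c : Quaternion ℝ)
    (has : a + star a ≠ 0) :
    a * ((2 * (a + star a))⁻¹ * (c + a⁻¹ * c * star a)) +
      ((2 * (a + star a))⁻¹ * (c + a⁻¹ * c * star a)) * a = c := by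
  have hcomm : Commute (2 * (a + star a)) a :=
    (Commute.ofNat_left 2 a).mul_left (Quaternion.commute_self_add_star a a)
  have htwo : (2 : Quaternion ℝ) ≠ 0 := fun h => two_ne_zero (congrArg QuaternionAlgebra.re h)
  have hs : 2 * (a + star a) ≠ 0 := mul_ne_zero htwo has
  exact hcomm.mul_inv_mul_add_inv_mul_mul_eq hs (Quaternion.mul_add_inv_mul_star_add_mul a c)

theorem quaternion_sylvester_equal_coeffs (a c : Quaternion ℝ)
    (ha : a ≠ 0) (has : a + star a ≠ 0) :
    a * ((2 * (a + star a))⁻¹ * (c + a⁻¹ * c * star a)) +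
      ((2 * (a + star a))⁻¹ * (c + a⁻¹ * c * star a)) * a = c :=
  quaternion_sylvester_equal_coeffs_general a c has
end

section
/- Let w : Fin 3 → ℝ with each w i equal to 1 or −1, let Q be the diagonal quadratic form on Fin 3 → ℝ with weights w, let A = CliffordAlgebra Q, and let conj : A → A denote Clifford conjugation (reversal composed with grade involution). Let a, b, c ∈ A and set d := a^2 + b·conj b + a·(b + conj b). If d is a unit of A, then x := d⁻¹·(a·c + c·conj b) (using the inverse of the unit d) satisfies the Sylvester equation a·x + x·b = c. -/
/-- Clifford conjugation: reversal composed with grade involution. -/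
noncomputable def cliffordConj {n : ℕ} (w : Fin n → ℝ) :
    CliffordAlgebra (QuadraticMap.weightedSumSquares ℝ w) →
      CliffordAlgebra (QuadraticMap.weightedSumSquares ℝ w) :=
  fun a => CliffordAlgebra.reverse (CliffordAlgebra.involute a)

/-!
Clifford conjugation negates grades 1 and 2 and fixes grades 0 and 3, so in dimension 3 the
element `x + conj x` lies in the span of `1` and the pseudoscalar `e₀e₁e₂`, which is central
because the dimension is odd. Since `b * conj b` is self-conjugate, it is central as well.
For central `s = b + b'` and `p = b b'` one has `b' b = b b'`, hence
`a (a c + c b') + (a c + c b') b = (a² + p + a s) c = d c`, and `a` commutes with `d`;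
multiplying by `d⁻¹` on the left gives `a x + x b = c`.
-/

theorem sylvester_solution_of_mem_center {A : Type*} [Ring A] (a b b' c : A)
    (hs : b + b' ∈ Subring.center A) (hp : b * b' ∈ Subring.center A)
    (hd : IsUnit (a ^ 2 + b * b' + a * (b + b'))) :
    a * (↑hd.unit⁻¹ * (a * c + c * b')) + (↑hd.unit⁻¹ * (a * c + c * b')) * b = c := by
  rw [Subring.mem_center_iff] at hs hp
  have hbb' : b' * b = b * b' := by
    have := hs b
    rw [mul_add, add_mul] at this
    exact (add_left_cancel this).symm
  have hdc : a * (a * c + c * b') + (a * c + c * b') * b = ↑hd.unit * c := by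
    calc a * (a * c + c * b') + (a * c + c * b') * b
        = a ^ 2 * c + a * (c * (b + b')) + c * (b' * b) := by noncomm_ring
      _ = ↑hd.unit * c := by rw [hs c, hbb', hp c, hd.unit_spec]; noncomm_ring
  have had : Commute a ↑hd.unit := by
    rw [hd.unit_spec]
    exact (((Commute.refl a).pow_right 2).add_right (hp a)).add_right
      ((Commute.refl a).mul_right (hs a))
  calc a * (↑hd.unit⁻¹ * (a * c + c * b')) + (↑hd.unit⁻¹ * (a * c + c * b')) * b
      = ↑hd.unit⁻¹ * (↑hd.unit * c) := by
        rw [← hdc, ← mul_assoc, had.units_inv_right.eq]; noncomm_ring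
    _ = c := Units.inv_mul_cancel_left _ _

namespace QuadraticMap

variable {R κ : Type*} [CommRing R] [Fintype κ] [DecidableEq κ] (w : κ → R)

theorem weightedSumSquares_single_one (i : κ) :
    weightedSumSquares R w (Pi.single i 1) = w i := by
  rw [weightedSumSquares_apply, Finset.sum_eq_single i] <;> simp_all

theorem isOrtho_single_one {i j : κ} (h : i ≠ j) :
    (weightedSumSquares R w).IsOrtho (Pi.single i 1) (Pi.single j 1) := by
  rw [isOrtho_def, weightedSumSquares_apply, weightedSumSquares_apply, weightedSumSquares_apply,
    ← Finset.sum_add_distrib]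
  refine Finset.sum_congr rfl fun k _ => ?_
  by_cases hi : k = i <;> by_cases hj : k = j <;> simp_all

end QuadraticMap

namespace CliffordAlgebra

variable {R : Type*} [CommRing R]

theorem mem_center_of_forall_commute_ι {M : Type*} [AddCommGroup M] [Module R M]
    {Q : QuadraticForm R M} {z : CliffordAlgebra Q} (h : ∀ m, Commute (ι Q m) z) :
    z ∈ Subalgebra.center R (CliffordAlgebra Q) := by
  have hle : Algebra.adjoin R (Set.range (ι Q)) ≤ Subalgebra.centralizer R {z} :=
    Algebra.adjoin_le <| Set.range_subset_iff.2 fun m =>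
      (Subalgebra.mem_centralizer_iff R).2 fun g hg => hg ▸ (h m).eq.symm
  rw [adjoin_range_ι] at hle
  exact Subalgebra.mem_center_iff.2 fun b =>
    ((Subalgebra.mem_centralizer_iff R).1 (hle Algebra.mem_top) z rfl).symm

theorem submodule_eq_top_of_ι_mul_mem {M : Type*} [AddCommGroup M] [Module R M]
    {Q : QuadraticForm R M} (S : Submodule R (CliffordAlgebra Q)) (h1 : 1 ∈ S)
    (h : ∀ m, ∀ x ∈ S, ι Q m * x ∈ S) : S = ⊤ := by
  refine Submodule.eq_top_iff'.2 fun x => ?_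
  induction x using left_induction with
  | algebraMap r =>
    exact (Algebra.algebraMap_eq_smul_one (A := CliffordAlgebra Q) r) ▸ S.smul_mem r h1
  | add x y hx hy => exact S.add_mem hx hy
  | ι_mul x m hx => exact h m x hx

section Generators

variable {κ : Type*} [Fintype κ] [DecidableEq κ] (w : κ → R)

noncomputable def basisVector (i : κ) : CliffordAlgebra (QuadraticMap.weightedSumSquares R w) :=
  ι _ (Pi.single i 1)

theorem basisVector_mul_self (i : κ) :
    basisVector w i * basisVector w i = algebraMap R _ (w i) := by
  rw [basisVector, ι_sq_scalar, QuadraticMap.weightedSumSquares_single_one]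

theorem basisVector_mul_basisVector_of_ne {i j : κ} (h : i ≠ j) :
    basisVector w i * basisVector w j = -(basisVector w j * basisVector w i) :=
  ι_mul_ι_comm_of_isOrtho (QuadraticMap.isOrtho_single_one w h)

theorem ι_eq_sum_smul_basisVector (m : κ → R) :
    ι (QuadraticMap.weightedSumSquares R w) m = ∑ i, m i • basisVector w i := by
  conv_lhs => rw [← Finset.univ_sum_single m]
  simp only [map_sum, basisVector, ← map_smul, ← Pi.single_smul, smul_eq_mul, mul_one]

theorem basisVector_mul_basisVector_mul_self (i : κ)
    (x : CliffordAlgebra (QuadraticMap.weightedSumSquares R w)) :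
    basisVector w i * (basisVector w i * x) = w i • x := by
  rw [← mul_assoc, basisVector_mul_self, Algebra.smul_def]

theorem mem_center_of_forall_commute_basisVector
    {z : CliffordAlgebra (QuadraticMap.weightedSumSquares R w)}
    (h : ∀ i, Commute (basisVector w i) z) : z ∈ Subalgebra.center R _ := by
  refine mem_center_of_forall_commute_ι fun m => ?_
  rw [ι_eq_sum_smul_basisVector]
  exact Commute.sum_left _ _ _ fun i _ => (h i).smul_left _

theorem submodule_eq_top_of_basisVector_mul_mem
    (S : Submodule R (CliffordAlgebra (QuadraticMap.weightedSumSquares R w)))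
    (h1 : 1 ∈ S) (h : ∀ i, ∀ x ∈ S, basisVector w i * x ∈ S) : S = ⊤ := by
  refine submodule_eq_top_of_ι_mul_mem S h1 fun m x hx => ?_
  rw [ι_eq_sum_smul_basisVector, Finset.sum_mul]
  exact S.sum_mem fun i _ => smul_mul_assoc (m i) (basisVector w i) x ▸ S.smul_mem _ (h i x hx)

theorem basisVector_mul_basisVector_of_lt [LinearOrder κ] {i j : κ} (h : j < i) :
    basisVector w i * basisVector w j = -(basisVector w j * basisVector w i) :=
  basisVector_mul_basisVector_of_ne w h.ne'

theorem basisVector_mul_basisVector_mul_of_lt [LinearOrder κ] {i j : κ} (h : j < i)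
    (x : CliffordAlgebra (QuadraticMap.weightedSumSquares R w)) :
    basisVector w i * (basisVector w j * x) = -(basisVector w j * (basisVector w i * x)) := by
  rw [← mul_assoc, basisVector_mul_basisVector_of_lt w h, neg_mul, mul_assoc]

end Generators

section Three

variable (w : Fin 3 → R)

local notation "e" => basisVector w

noncomputable def pseudoscalar : CliffordAlgebra (QuadraticMap.weightedSumSquares R w) :=
  e 0 * (e 1 * e 2)

theorem pseudoscalar_mem_center : pseudoscalar w ∈ Subalgebra.center R _ := by
  refine mem_center_of_forall_commute_basisVector w fun k => ?_
  rw [Commute, SemiconjBy, pseudoscalar]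
  -- this simp set sorts every word in the `e i` into increasing order of indices
  fin_cases k <;>
    simp (disch := decide) only [Fin.zero_eta, Fin.mk_one, Fin.reduceFinMk, mul_assoc,
      basisVector_mul_basisVector_of_lt, basisVector_mul_basisVector_mul_of_lt,
      basisVector_mul_self, basisVector_mul_basisVector_mul_self, mul_neg, neg_neg,
      mul_smul_comm]

theorem span_monomials_eq_top :
    Submodule.span R {1, e 0, e 1, e 2, e 0 * e 1, e 0 * e 2, e 1 * e 2, e 0 * (e 1 * e 2)} =
      ⊤ := by
  refine submodule_eq_top_of_basisVector_mul_mem w _ (Submodule.subset_span (by simp))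
    fun k x hx => ?_
  induction hx using Submodule.span_induction with
  | mem s hs =>
    simp only [Set.mem_insert_iff, Set.mem_singleton_iff] at hs
    fin_cases k <;> rcases hs with rfl | rfl | rfl | rfl | rfl | rfl | rfl | rfl <;>
      simp (disch := decide) only [Fin.zero_eta, Fin.mk_one, Fin.reduceFinMk,
        basisVector_mul_basisVector_of_lt, basisVector_mul_basisVector_mul_of_lt,
        basisVector_mul_self, basisVector_mul_basisVector_mul_self, mul_neg, neg_neg,
        mul_one, mul_smul_comm, Algebra.algebraMap_eq_smul_one, neg_mem_iff] <;>
      first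
        | exact Submodule.smul_mem _ _ (Submodule.subset_span (by simp))
        | exact Submodule.subset_span (by simp)
  | zero => simp
  | add x y _ _ hx hy => rw [mul_add]; exact Submodule.add_mem _ hx hy
  | smul r x _ hx => rw [mul_smul_comm]; exact Submodule.smul_mem _ _ hx

end Three

end CliffordAlgebra

open CliffordAlgebra

section Conj

variable {n : ℕ} (w : Fin n → ℝ)

theorem cliffordConj_add (x y : CliffordAlgebra (QuadraticMap.weightedSumSquares ℝ w)) :
    cliffordConj w (x + y) = cliffordConj w x + cliffordConj w y := by
  simp only [cliffordConj, map_add]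

theorem cliffordConj_smul (r : ℝ) (x : CliffordAlgebra (QuadraticMap.weightedSumSquares ℝ w)) :
    cliffordConj w (r • x) = r • cliffordConj w x := by
  simp only [cliffordConj, map_smul]

theorem cliffordConj_one : cliffordConj w 1 = 1 := by
  simp only [cliffordConj, map_one, reverse.map_one]

theorem cliffordConj_mul (x y : CliffordAlgebra (QuadraticMap.weightedSumSquares ℝ w)) :
    cliffordConj w (x * y) = cliffordConj w y * cliffordConj w x := by
  simp only [cliffordConj, map_mul, reverse.map_mul]

theorem cliffordConj_cliffordConj (x : CliffordAlgebra (QuadraticMap.weightedSumSquares ℝ w)) :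
    cliffordConj w (cliffordConj w x) = x := by
  simp only [cliffordConj, reverse_involute, involute_involute, reverse_reverse]

theorem cliffordConj_basisVector (i : Fin n) :
    cliffordConj w (basisVector w i) = -basisVector w i := by
  simp only [cliffordConj, basisVector, involute_ι, map_neg, reverse_ι]

end Conj

section Conj3

variable (w : Fin 3 → ℝ)

theorem add_cliffordConj_mem_center (x : CliffordAlgebra (QuadraticMap.weightedSumSquares ℝ w)) :
    x + cliffordConj w x ∈ Subalgebra.center ℝ _ := by
  have hx : x ∈ (⊤ : Submodule ℝ _) := Submodule.mem_top
  rw [← span_monomials_eq_top] at hx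
  induction hx using Submodule.span_induction with
  | mem s hs =>
    simp only [Set.mem_insert_iff, Set.mem_singleton_iff] at hs
    rcases hs with rfl | rfl | rfl | rfl | rfl | rfl | rfl | rfl <;>
      simp (disch := decide) only [cliffordConj_mul, cliffordConj_basisVector, cliffordConj_one,
        mul_neg, neg_mul, neg_neg, mul_assoc, add_neg_cancel,
        basisVector_mul_basisVector_of_lt, basisVector_mul_basisVector_mul_of_lt] <;>
      first
        | exact zero_mem _
        | exact add_mem (one_mem _) (one_mem _)
        | exact add_mem (pseudoscalar_mem_center w) (pseudoscalar_mem_center w)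
  | zero => simp only [cliffordConj, map_zero, add_zero, zero_mem]
  | add x y _ _ hx hy =>
    rw [cliffordConj_add, add_add_add_comm]
    exact add_mem hx hy
  | smul r x _ hx =>
    rw [cliffordConj_smul, ← smul_add]
    exact Subalgebra.smul_mem _ hx r

theorem mul_cliffordConj_mem_center (b : CliffordAlgebra (QuadraticMap.weightedSumSquares ℝ w)) :
    b * cliffordConj w b ∈ Subalgebra.center ℝ _ := by
  have h := add_cliffordConj_mem_center w (b * cliffordConj w b)
  rw [cliffordConj_mul, cliffordConj_cliffordConj, ← two_smul ℝ] at h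
  simpa using Subalgebra.smul_mem _ h (2⁻¹ : ℝ)

end Conj3

theorem clifford3_sylvester_left_solution_general (w : Fin 3 → ℝ)
    (a b c : CliffordAlgebra (QuadraticMap.weightedSumSquares ℝ w))
    (hd : IsUnit (a ^ 2 + b * cliffordConj w b + a * (b + cliffordConj w b))) :
    a * (↑hd.unit⁻¹ * (a * c + c * cliffordConj w b)) +
      (↑hd.unit⁻¹ * (a * c + c * cliffordConj w b)) * b = c :=
  sylvester_solution_of_mem_center a b _ c
    (add_cliffordConj_mem_center w b) (mul_cliffordConj_mem_center w b) hd

theorem clifford3_sylvester_left_solution (w : Fin 3 → ℝ)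
    (hw : ∀ i, w i = 1 ∨ w i = -1)
    (a b c : CliffordAlgebra (QuadraticMap.weightedSumSquares ℝ w))
    (hd : IsUnit (a ^ 2 + b * cliffordConj w b + a * (b + cliffordConj w b))) :
    a * (↑hd.unit⁻¹ * (a * c + c * cliffordConj w b)) +
      (↑hd.unit⁻¹ * (a * c + c * cliffordConj w b)) * b = c :=
  clifford3_sylvester_left_solution_general w a b c hd
end

section
/- Let w : Fin 3 → ℝ with each w i equal to 1 or −1, let Q be the diagonal quadratic form on Fin 3 → ℝ with weights w, let A = CliffordAlgebra Q, and let conj : A → A denote Clifford conjugation (reversal composed with grade involution). Let a, b, c ∈ A and set d' := b^2 + (conj a)·a + b·(a + conj a). If d' is a unit of A, then x := ((conj a)·c + c·b)·d'⁻¹ (using the inverse of the unit d') satisfies the Sylvester equation a·x + x·b = c. -/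
/-!
Write `a' = conj a`. If `s = a + a'` and `n = a' * a` are central, then
`a (a' c + c b) + (a' c + c b) b = c (b² + n + b s) = c d`, and `b` commutes with `d`, so
right multiplication by `d⁻¹` commutes with `x ↦ a x + x b`.
In a Clifford algebra on three orthogonal generators, conjugation fixes the scalars and the
pseudoscalar `e₀ e₁ e₂` and negates vectors and bivectors, so `a + conj a` lies in the span
of `1` and `e₀ e₁ e₂`, which is central in odd dimension. Since `conj n = n`, also
`n = (n + conj n) / 2` is central.
-/

theorem sylvester_mul_add_mul_eq {R : Type*} [Ring R] {a a' b : R}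
    (hs : ∀ y, Commute (a + a') y) (hn : ∀ y, Commute (a' * a) y) (c : R) :
    a * (a' * c + c * b) + (a' * c + c * b) * b = c * (b ^ 2 + a' * a + b * (a + a')) := by
  have haa' : a * a' = a' * a := by
    have h := (hs a).eq
    rw [add_mul, mul_add] at h
    exact (add_left_cancel h).symm
  calc a * (a' * c + c * b) + (a' * c + c * b) * b
      = (a * a') * c + (a + a') * (c * b) + c * b ^ 2 := by noncomm_ring
    _ = c * (a' * a) + c * b * (a + a') + c * b ^ 2 := by
      rw [haa', (hn c).eq, (hs _).eq]
    _ = c * (b ^ 2 + a' * a + b * (a + a')) := by noncomm_ring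

theorem sylvester_mul_units_inv {R : Type*} [Ring R] (a y : R) {b : R} {u : Rˣ}
    (hb : Commute b u) :
    a * (y * ↑u⁻¹) + y * ↑u⁻¹ * b = (a * y + y * b) * ↑u⁻¹ := by
  rw [mul_assoc y, ← hb.units_inv_right.eq]; noncomm_ring

theorem sylvester_solution_of_commute {R : Type*} [Ring R] {a a' b c : R}
    (hs : ∀ y, Commute (a + a') y) (hn : ∀ y, Commute (a' * a) y)
    (hd : IsUnit (b ^ 2 + a' * a + b * (a + a'))) :
    a * ((a' * c + c * b) * ↑hd.unit⁻¹) + (a' * c + c * b) * ↑hd.unit⁻¹ * b = c := by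
  have hb : Commute b hd.unit := by
    rw [hd.unit_spec]
    exact (((Commute.refl b).pow_right 2).add_right (hn b).symm).add_right
      ((Commute.refl b).mul_right (hs b).symm)
  rw [sylvester_mul_units_inv a _ hb, sylvester_mul_add_mul_eq hs hn, mul_assoc, hd.mul_val_inv,
    mul_one]

open CliffordAlgebra QuadraticMap

namespace WeightedClifford

variable {n : ℕ} {w : Fin n → ℝ}

variable (w) in
noncomputable def gen (i : Fin n) : CliffordAlgebra (weightedSumSquares ℝ w) :=
  ι _ (Pi.single i 1)

theorem gen_mul_self (i : Fin n) : gen w i * gen w i = w i • 1 := by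
  rw [gen, ι_sq_scalar, Algebra.algebraMap_eq_smul_one]
  simp [Pi.single_apply]

theorem gen_mul_gen_mul_self (i : Fin n) (z : CliffordAlgebra (weightedSumSquares ℝ w)) :
    gen w i * (gen w i * z) = w i • z := by
  rw [← mul_assoc, gen_mul_self, smul_mul_assoc, one_mul]

theorem isOrtho_single_single {i j : Fin n} (h : i ≠ j) :
    (weightedSumSquares ℝ w).IsOrtho (Pi.single i 1) (Pi.single j 1) := by
  rw [isOrtho_def]
  simp only [weightedSumSquares_apply, ← Finset.sum_add_distrib]
  refine Finset.sum_congr rfl fun k _ => ?_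
  by_cases hi : k = i <;> by_cases hj : k = j <;> simp_all

theorem gen_mul_gen_of_ne {i j : Fin n} (h : i ≠ j) : gen w i * gen w j = -(gen w j * gen w i) :=
  ι_mul_ι_comm_of_isOrtho (isOrtho_single_single h)

theorem gen_mul_gen_of_lt {i j : Fin n} (h : i < j) : gen w j * gen w i = -(gen w i * gen w j) :=
  gen_mul_gen_of_ne h.ne'

theorem gen_mul_gen_mul_of_lt {i j : Fin n} (h : i < j)
    (z : CliffordAlgebra (weightedSumSquares ℝ w)) :
    gen w j * (gen w i * z) = -(gen w i * (gen w j * z)) := by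
  rw [← mul_assoc, gen_mul_gen_of_lt h, neg_mul, mul_assoc]

theorem ι_eq_sum_smul_gen (v : Fin n → ℝ) :
    ι (weightedSumSquares ℝ w) v = ∑ i, v i • gen w i := by
  conv_lhs => rw [← (Pi.basisFun ℝ (Fin n)).sum_repr v]
  simp [gen]

theorem commute_of_forall_commute_gen {z : CliffordAlgebra (weightedSumSquares ℝ w)}
    (h : ∀ i, Commute z (gen w i)) (y : CliffordAlgebra (weightedSumSquares ℝ w)) :
    Commute z y := by
  refine Algebra.commute_of_mem_adjoin_of_forall_mem_commute (s := Set.range (ι _))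
    (by rw [adjoin_range_ι]; trivial) ?_
  rintro _ ⟨v, rfl⟩
  rw [ι_eq_sum_smul_gen]
  exact Commute.sum_right _ _ _ fun i _ => (h i).smul_right _

theorem cliffordConj_add (x y : CliffordAlgebra (weightedSumSquares ℝ w)) :
    cliffordConj w (x + y) = cliffordConj w x + cliffordConj w y := by
  simp [cliffordConj]

theorem cliffordConj_smul (r : ℝ) (x : CliffordAlgebra (weightedSumSquares ℝ w)) :
    cliffordConj w (r • x) = r • cliffordConj w x := by
  simp [cliffordConj]

theorem cliffordConj_mul (x y : CliffordAlgebra (weightedSumSquares ℝ w)) :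
    cliffordConj w (x * y) = cliffordConj w y * cliffordConj w x := by
  simp [cliffordConj]

theorem cliffordConj_cliffordConj (x : CliffordAlgebra (weightedSumSquares ℝ w)) :
    cliffordConj w (cliffordConj w x) = x := by
  simp [cliffordConj, ← reverse_involute]

theorem cliffordConj_one : cliffordConj w 1 = 1 := by simp [cliffordConj]

theorem cliffordConj_gen (i : Fin n) : cliffordConj w (gen w i) = -gen w i := by
  simp [cliffordConj, gen]

theorem cliffordConj_gen_mul_gen_of_lt {i j : Fin n} (h : i < j) :
    cliffordConj w (gen w i * gen w j) = -(gen w i * gen w j) := by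
  rw [cliffordConj_mul, cliffordConj_gen, cliffordConj_gen, neg_mul_neg, gen_mul_gen_of_lt h]

section Dim3

variable {w : Fin 3 → ℝ}

variable (w) in
noncomputable def monomialSpan : Submodule ℝ (CliffordAlgebra (weightedSumSquares ℝ w)) :=
  Submodule.span ℝ {1, gen w 0, gen w 1, gen w 2, gen w 0 * gen w 1, gen w 0 * gen w 2,
    gen w 1 * gen w 2, gen w 0 * (gen w 1 * gen w 2)}

theorem mul_gen_mem_monomialSpan {x : CliffordAlgebra (weightedSumSquares ℝ w)}
    (hx : x ∈ monomialSpan w) (i : Fin 3) : x * gen w i ∈ monomialSpan w := by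
  induction hx using Submodule.span_induction with
  | mem x hx =>
    simp only [Set.mem_insert_iff, Set.mem_singleton_iff] at hx
    fin_cases i <;> rcases hx with rfl | rfl | rfl | rfl | rfl | rfl | rfl | rfl <;>
      simp (disch := decide) only [Fin.zero_eta, Fin.mk_one, Fin.reduceFinMk, one_mul, mul_assoc,
        gen_mul_gen_mul_of_lt, gen_mul_gen_of_lt, gen_mul_gen_mul_self, gen_mul_self, mul_neg,
        mul_smul_comm, mul_one] <;>
      (repeat first | apply Submodule.neg_mem | apply Submodule.smul_mem) <;>
      exact Submodule.subset_span (by simp)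
  | zero => simp
  | add x y _ _ hx hy => rw [add_mul]; exact add_mem hx hy
  | smul r x _ hx => rw [smul_mul_assoc]; exact Submodule.smul_mem _ _ hx

theorem monomialSpan_eq_top : monomialSpan w = ⊤ := by
  suffices h : ∀ y x, x ∈ monomialSpan w → x * y ∈ monomialSpan w from
    eq_top_iff.2 fun y _ => one_mul y ▸ h y 1 (Submodule.subset_span (by simp))
  intro y
  induction y using CliffordAlgebra.induction with
  | algebraMap r =>
    intro x hx
    rw [← Algebra.commutes, ← Algebra.smul_def]
    exact Submodule.smul_mem _ _ hx
  | ι v =>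
    intro x hx
    rw [ι_eq_sum_smul_gen, Finset.mul_sum]
    exact Submodule.sum_mem _ fun i _ => mul_smul_comm (v i) x _ ▸
      Submodule.smul_mem _ _ (mul_gen_mem_monomialSpan hx i)
  | mul y z hy hz => intro x hx; rw [← mul_assoc]; exact hz _ (hy _ hx)
  | add y z hy hz => intro x hx; rw [mul_add]; exact add_mem (hy _ hx) (hz _ hx)

theorem commute_pseudoscalar (y : CliffordAlgebra (weightedSumSquares ℝ w)) :
    Commute (gen w 0 * (gen w 1 * gen w 2)) y := by
  refine commute_of_forall_commute_gen (fun i => ?_) y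
  fin_cases i <;>
    simp (disch := decide) only [Commute, SemiconjBy, Fin.zero_eta, Fin.mk_one, Fin.reduceFinMk,
      mul_assoc, gen_mul_gen_mul_of_lt, gen_mul_gen_of_lt, gen_mul_gen_mul_self, gen_mul_self,
      mul_neg, neg_neg, mul_smul_comm]

theorem cliffordConj_pseudoscalar :
    cliffordConj w (gen w 0 * (gen w 1 * gen w 2)) = gen w 0 * (gen w 1 * gen w 2) := by
  simp (disch := decide) only [cliffordConj_mul, cliffordConj_gen, mul_neg, neg_mul, neg_neg,
    mul_assoc, gen_mul_gen_mul_of_lt, gen_mul_gen_of_lt]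

theorem commute_add_cliffordConj (x y : CliffordAlgebra (weightedSumSquares ℝ w)) :
    Commute (x + cliffordConj w x) y := by
  have hx : x ∈ monomialSpan w := monomialSpan_eq_top ▸ Submodule.mem_top
  induction hx using Submodule.span_induction with
  | mem x hx =>
    simp only [Set.mem_insert_iff, Set.mem_singleton_iff] at hx
    have of_neg {m} (hm : cliffordConj w m = -m) : Commute (m + cliffordConj w m) y := by
      rw [hm, add_neg_cancel]
      exact Commute.zero_left y
    have of_self {m} (hm : cliffordConj w m = m) (hc : Commute m y) :
        Commute (m + cliffordConj w m) y := by
      rw [hm]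
      exact hc.add_left hc
    rcases hx with rfl | rfl | rfl | rfl | rfl | rfl | rfl | rfl
    · exact of_self cliffordConj_one (Commute.one_left y)
    · exact of_neg (cliffordConj_gen 0)
    · exact of_neg (cliffordConj_gen 1)
    · exact of_neg (cliffordConj_gen 2)
    · exact of_neg (cliffordConj_gen_mul_gen_of_lt (by decide))
    · exact of_neg (cliffordConj_gen_mul_gen_of_lt (by decide))
    · exact of_neg (cliffordConj_gen_mul_gen_of_lt (by decide))
    exact of_self cliffordConj_pseudoscalar (commute_pseudoscalar y)
  | zero => simp [cliffordConj]
  | add p q _ _ hp hq =>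
    rw [cliffordConj_add, add_add_add_comm]
    exact hp.add_left hq
  | smul r p _ hp =>
    rw [cliffordConj_smul, ← smul_add]
    exact hp.smul_left r

theorem commute_cliffordConj_mul_self (x y : CliffordAlgebra (weightedSumSquares ℝ w)) :
    Commute (cliffordConj w x * x) y := by
  have h := commute_add_cliffordConj (cliffordConj w x * x) y
  rw [cliffordConj_mul, cliffordConj_cliffordConj, ← two_smul ℝ] at h
  simpa using h.smul_left (2⁻¹ : ℝ)

end Dim3

end WeightedClifford

theorem clifford3_sylvester_right_solution_general (w : Fin 3 → ℝ)
    (a b c : CliffordAlgebra (QuadraticMap.weightedSumSquares ℝ w))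
    (hd : IsUnit (b ^ 2 + cliffordConj w a * a + b * (a + cliffordConj w a))) :
    a * ((cliffordConj w a * c + c * b) * ↑hd.unit⁻¹) +
      ((cliffordConj w a * c + c * b) * ↑hd.unit⁻¹) * b = c :=
  sylvester_solution_of_commute (WeightedClifford.commute_add_cliffordConj a)
    (WeightedClifford.commute_cliffordConj_mul_self a) hd

theorem clifford3_sylvester_right_solution (w : Fin 3 → ℝ)
    (hw : ∀ i, w i = 1 ∨ w i = -1)
    (a b c : CliffordAlgebra (QuadraticMap.weightedSumSquares ℝ w))
    (hd : IsUnit (b ^ 2 + cliffordConj w a * a + b * (a + cliffordConj w a))) :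
    a * ((cliffordConj w a * c + c * b) * ↑hd.unit⁻¹) +
      ((cliffordConj w a * c + c * b) * ↑hd.unit⁻¹) * b = c :=
  clifford3_sylvester_right_solution_general w a b c hd
end

section
/- Let w : Fin 2 → ℝ with each w i equal to 1 or −1, let Q be the diagonal quadratic form on Fin 2 → ℝ with weights w, let A = CliffordAlgebra Q, and let conj : A → A denote Clifford conjugation (reversal composed with grade involution). Let a, b, c, x ∈ A satisfy a·x + x·b = c, and set d := a^2 + b·conj b + a·(b + conj b). Then d·x = a·c + c·conj b. -/
open CliffordAlgebra QuadraticMap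
open scoped Quaternion

theorem mul_sylvester_eq_of_commute {A : Type*} [Ring A] {a b b' x : A}
    (hs : Commute x (b + b')) (hn : Commute x (b * b')) :
    (a ^ 2 + b * b' + a * (b + b')) * x = a * (a * x + x * b) + (a * x + x * b) * b' :=
  calc (a ^ 2 + b * b' + a * (b + b')) * x = a * a * x + x * (b * b') + a * (x * (b + b')) := by
        rw [hn.eq, hs.eq]; noncomm_ring
    _ = a * (a * x + x * b) + (a * x + x * b) * b' := by noncomm_ring

theorem Algebra.mem_range_algebraMap_of_algEquiv {R A B : Type*} [CommSemiring R] [Semiring A]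
    [Semiring B] [Algebra R A] [Algebra R B] (e : A ≃ₐ[R] B) {y : A}
    (hy : e y ∈ Set.range (algebraMap R B)) : y ∈ Set.range (algebraMap R A) := by
  obtain ⟨r, hr⟩ := hy
  exact ⟨r, e.injective (by rw [e.commutes, hr])⟩

theorem commute_of_mem_range_algebraMap {R A : Type*} [CommSemiring R] [Semiring A] [Algebra R A]
    (x : A) {y : A} (hy : y ∈ Set.range (algebraMap R A)) : Commute x y := by
  obtain ⟨r, rfl⟩ := hy
  exact Algebra.commute_algebraMap_right r x

namespace CliffordAlgebra

variable {R : Type*} [CommRing R]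

theorem map_star {M₁ M₂ : Type*} [AddCommGroup M₁] [AddCommGroup M₂] [Module R M₁] [Module R M₂]
    {Q₁ : QuadraticForm R M₁} {Q₂ : QuadraticForm R M₂} (f : Q₁ →qᵢ Q₂) (x : CliffordAlgebra Q₁) :
    map f (star x) = star (map f x) := by
  induction x using CliffordAlgebra.induction with
  | algebraMap r => simp only [star_algebraMap, AlgHom.commutes]
  | ι m => simp only [star_ι, map_neg, map_apply_ι]
  | mul x y hx hy => simp only [star_mul, map_mul, hx, hy]
  | add x y hx hy => simp only [star_add, map_add, hx, hy]

def weightedSumSquaresFinTwoIsometryEquiv (w : Fin 2 → R) :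
    (weightedSumSquares R w).IsometryEquiv (CliffordAlgebraQuaternion.Q (w 0) (w 1)) where
  toLinearEquiv := LinearEquiv.finTwoArrow R R
  map_app' v := by simp [weightedSumSquares_apply, Fin.sum_univ_two]

def finTwoEquivQuaternion (w : Fin 2 → R) :
    CliffordAlgebra (weightedSumSquares R w) ≃ₐ[R] ℍ[R, w 0, 0, w 1] :=
  (equivOfIsometry (weightedSumSquaresFinTwoIsometryEquiv w)).trans CliffordAlgebraQuaternion.equiv

theorem finTwoEquivQuaternion_star (w : Fin 2 → R) (x : CliffordAlgebra (weightedSumSquares R w)) :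
    finTwoEquivQuaternion w (star x) = star (finTwoEquivQuaternion w x) := by
  simp only [finTwoEquivQuaternion, AlgEquiv.trans_apply, equivOfIsometry_apply, map_star,
    CliffordAlgebraQuaternion.equiv_apply, CliffordAlgebraQuaternion.toQuaternion_star]

theorem self_add_star_mem_range_algebraMap {w : Fin 2 → R}
    (x : CliffordAlgebra (weightedSumSquares R w)) :
    x + star x ∈ Set.range (algebraMap R _) := by
  refine Algebra.mem_range_algebraMap_of_algEquiv (finTwoEquivQuaternion w) ?_
  rw [map_add, finTwoEquivQuaternion_star, QuaternionAlgebra.self_add_star',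
    ← QuaternionAlgebra.coe_algebraMap]
  exact Set.mem_range_self _

theorem self_mul_star_mem_range_algebraMap {w : Fin 2 → R}
    (x : CliffordAlgebra (weightedSumSquares R w)) :
    x * star x ∈ Set.range (algebraMap R _) := by
  refine Algebra.mem_range_algebraMap_of_algEquiv (finTwoEquivQuaternion w) ?_
  rw [map_mul, finTwoEquivQuaternion_star, QuaternionAlgebra.mul_star_eq_coe,
    ← QuaternionAlgebra.coe_algebraMap]
  exact Set.mem_range_self _

end CliffordAlgebra

theorem clifford2_sylvester_left_necessary_general (w : Fin 2 → ℝ)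
    (a b c x : CliffordAlgebra (QuadraticMap.weightedSumSquares ℝ w))
    (hx : a * x + x * b = c) :
    (a ^ 2 + b * cliffordConj w b + a * (b + cliffordConj w b)) * x =
      a * c + c * cliffordConj w b := by
  have hconj : cliffordConj w b = star b := (star_def b).symm
  subst hx
  rw [hconj]
  exact mul_sylvester_eq_of_commute
    (commute_of_mem_range_algebraMap x (self_add_star_mem_range_algebraMap b))
    (commute_of_mem_range_algebraMap x (self_mul_star_mem_range_algebraMap b))

theorem clifford2_sylvester_left_necessary (w : Fin 2 → ℝ)
    (hw : ∀ i, w i = 1 ∨ w i = -1)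
    (a b c x : CliffordAlgebra (QuadraticMap.weightedSumSquares ℝ w))
    (hx : a * x + x * b = c) :
    (a ^ 2 + b * cliffordConj w b + a * (b + cliffordConj w b)) * x =
      a * c + c * cliffordConj w b :=
  clifford2_sylvester_left_necessary_general w a b c x hx
end
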